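/- Fix f : ℝ → ℝ which is odd, 2π-periodic, satisfies |f(x)| ≤ 1 for all x, and f(x) = 0 if and only if x ∈ πℤ (for example f = sin). Then there exists ε₀ > 0 such that for all ε with 0 < ε < ε₀ the following holds. Call a 4-tuple (a, b, h, p) of unit quaternions admissible if: (i) Re a = Re b = Re h = 0; (ii) Re((p⁻¹·b·p)⁻¹·b·a) = 0; (iii) (b·h)·p = p·(b·h); (iv) (a·p⁻¹)·h = −h·(a·p⁻¹); (v) there exist β' ∈ ℝ and a pure unit quaternion Q with b·h = e^{β'Q} and p = e^{ε f(β') Q}. For β ∈ ℝ let ρ(β) denote the tuple (i, e^{(π/2 + β + εf(β))k}·i, −j·e^{−εf(β)k}, e^{εf(β)k}). Then every admissible tuple is simultaneously conjugate, by a unit quaternion, to ρ(β) for exactly one β ∈ [0, 2π). (Hence the perturbed moduli space R^♮_π(B³, A₁ ∪ A₂) is homeomorphic to a circle parameterized by β ∈ ℝ/2πℤ.) -/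

import Mathlib

open Quaternion

noncomputable section

/-- The quaternion `i`. -/
def qi : ℍ[ℝ] := ⟨0, 1, 0, 0⟩

/-- The quaternion `j`. -/
def qj : ℍ[ℝ] := ⟨0, 0, 1, 0⟩

/-- The quaternion `k`. -/
def qk : ℍ[ℝ] := ⟨0, 0, 0, 1⟩

/-- The quaternionic exponential `e^{tQ} = cos t + (sin t) • Q` for a pure unit
quaternion `Q`. -/
def expQ (t : ℝ) (Q : ℍ[ℝ]) : ℍ[ℝ] := ((Real.cos t : ℝ) : ℍ[ℝ]) + (Real.sin t) • Q

/-!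
Pure unit quaternions are handled as square roots of `-1`, a property that every conjugation
preserves. Conjugate the axis `Q` of the holonomy condition to `k` and `a` to `i`. This needs
`a` and `b` to anticommute with `Q`, which follows from `Re h = 0` and from
`(a p⁻¹) h = -h (a p⁻¹)` as soon as `sin β' ≠ 0` and `sin (εf(β')) ≠ 0`; when `f(β') = 0`
instead, `p = 1`, `bh = ±1`, and the axis can be replaced by `a b`. Then `b` is a unit vector
of the `ij`-plane orthogonal to `e^{(β'+εf(β'))k} i`, hence `±ρ(β')(b)`, and the sign is
absorbed by conjugating with `i` and replacing `β'` by `-β'` (`f` is odd). Only `|εf| < π` is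
used, so `ε₀ = 1`. Uniqueness: `cos β = Re (b h)` and `sin β = Re (b p a)` are invariant under
conjugation.
-/

attribute [local simp] re_mul imI_mul imJ_mul imK_mul

section InnerAut

variable (R : Type*) {A : Type*} [CommSemiring R] [Ring A] [Algebra R A]

def innerAut : Aˣ →* (A ≃ₐ[R] A) :=
  (MulSemiringAction.toAlgAut (ConjAct Aˣ) R A).comp ConjAct.toConjAct.toMonoidHom

variable {R}

theorem innerAut_apply (u : Aˣ) (x : A) : innerAut R u x = u * x * ↑u⁻¹ := rfl

theorem innerAut_apply_eq_iff {u : Aˣ} {x y : A} : innerAut R u x = y ↔ ↑u * x = y * u := by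
  rw [innerAut_apply, Units.mul_inv_eq_iff_eq_mul]

theorem coe_innerAut_mk0 {D : Type*} [DivisionRing D] [Algebra R D] (g : D) (hg : g ≠ 0) :
    ⇑(innerAut R (Units.mk0 g hg)) = fun x => g * x * g⁻¹ := by
  ext x
  rw [innerAut_apply, Units.val_inv_eq_inv_val, Units.val_mk0]

end InnerAut

section SquareRootsOfNegOne

variable {A : Type*} [Ring A] {x y u : A}

theorem eq_neg_mul_of_mul_eq {c : A} (hx : x * x = -1) (h : x * y = c) : y = -(x * c) := by
  rw [← h, ← mul_assoc, hx, neg_one_mul, neg_neg]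

theorem one_sub_mul_mul_eq_mul_one_sub_mul (hx : x * x = -1) (hy : y * y = -1) :
    (1 - y * x) * x = y * (1 - y * x) := by
  rw [sub_mul, mul_sub, mul_assoc, hx, ← mul_assoc, hy]
  noncomm_ring

theorem one_sub_mul_ne_zero (hy : y * y = -1) (hxy : x ≠ -y) : 1 - y * x ≠ 0 := by
  intro h
  have : y * (1 - y * x) = 0 := by rw [h, mul_zero]
  rw [mul_sub, mul_one, ← mul_assoc, hy, neg_one_mul, sub_neg_eq_add] at this
  exact hxy (eq_neg_of_add_eq_zero_right this)

theorem one_sub_mul_mul_comm (hxu : x * u = -(u * x)) (hyu : y * u = -(u * y)) :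
    (1 - y * x) * u = u * (1 - y * x) := by
  rw [sub_mul, mul_sub, mul_assoc, hxu, mul_neg, ← mul_assoc, hyu, neg_mul, neg_neg,
    one_mul, mul_one, mul_assoc]

theorem mul_mul_self_eq_neg_one_and_anticomm (hx : x * x = -1) (hy : y * y = -1)
    (hxy : x * y = -(y * x)) :
    x * y * (x * y) = -1 ∧ x * (x * y) = -(x * y * x) ∧ y * (x * y) = -(x * y * y) := by
  have hyx : y * x = -(x * y) := by rw [hxy, neg_neg]
  refine ⟨?_, ?_, ?_⟩
  · rw [mul_assoc, ← mul_assoc y, hyx, neg_mul, mul_assoc, hy]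
    simp only [mul_neg, mul_one, neg_neg, hx]
  · rw [← mul_assoc, hx, mul_assoc, hyx]
    simp only [mul_neg, ← mul_assoc, hx, neg_one_mul, neg_neg]
  · rw [← mul_assoc, hyx, neg_mul]

variable {K D : Type*} [CommSemiring K] [DivisionRing D] [Algebra K D] {x y z u v : D}

-- `1 - y * x` conjugates `x` to `y`; it vanishes only when `x = -y`, which `z` handles.
theorem exists_innerAut_eq (hx : x * x = -1) (hy : y * y = -1) (hz : z ≠ 0)
    (hzy : z * y = -(y * z)) : ∃ g : Dˣ, innerAut K g x = y := by
  by_cases hxy : x = -y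
  · refine ⟨Units.mk0 z hz, innerAut_apply_eq_iff.2 ?_⟩
    rw [Units.val_mk0, hxy, mul_neg, hzy, neg_neg]
  · exact ⟨Units.mk0 _ (one_sub_mul_ne_zero hy hxy),
      innerAut_apply_eq_iff.2 (one_sub_mul_mul_eq_mul_one_sub_mul hx hy)⟩

theorem exists_innerAut_eq_of_anticomm (hx : x * x = -1) (hy : y * y = -1) (hu : u ≠ 0)
    (hxu : x * u = -(u * x)) (hyu : y * u = -(u * y)) :
    ∃ g : Dˣ, innerAut K g x = y ∧ innerAut K g u = u := by
  by_cases hxy : x = -y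
  · refine ⟨Units.mk0 u hu, innerAut_apply_eq_iff.2 ?_, innerAut_apply_eq_iff.2 rfl⟩
    rw [Units.val_mk0, hxy, mul_neg, ← hyu]
  · exact ⟨Units.mk0 _ (one_sub_mul_ne_zero hy hxy),
      innerAut_apply_eq_iff.2 (one_sub_mul_mul_eq_mul_one_sub_mul hx hy),
      innerAut_apply_eq_iff.2 (one_sub_mul_mul_comm hxu hyu)⟩

theorem exists_innerAut_eq_and_eq (hx : x * x = -1) (hy : y * y = -1) (hu : u * u = -1)
    (hv : v * v = -1) (hxu : x * u = -(u * x)) (hyv : y * v = -(v * y)) (hz : z ≠ 0)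
    (hzv : z * v = -(v * z)) : ∃ g : Dˣ, innerAut K g x = y ∧ innerAut K g u = v := by
  obtain ⟨g₁, hg₁⟩ := exists_innerAut_eq (K := K) hu hv hz hzv
  have hv0 : v ≠ 0 := by rintro rfl; simp at hv
  obtain ⟨g₂, hg₂x, hg₂v⟩ := exists_innerAut_eq_of_anticomm (K := K) (x := innerAut K g₁ x)
    (by rw [← map_mul, hx, map_neg, map_one]) hy hv0
    (by rw [← hg₁, ← map_mul, hxu, map_neg, map_mul]) hyv
  exact ⟨g₂ * g₁, by rw [map_mul, AlgEquiv.mul_apply, hg₂x],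
    by rw [map_mul, AlgEquiv.mul_apply, hg₁, hg₂v]⟩

end SquareRootsOfNegOne

namespace Quaternion

variable {x y : ℍ[ℝ]}

theorem re_mul_comm (x y : ℍ[ℝ]) : (x * y).re = (y * x).re := by
  simp only [re_mul]; ring

theorem re_innerAut (g : ℍ[ℝ]ˣ) (x : ℍ[ℝ]) : (innerAut ℝ g x).re = x.re := by
  rw [innerAut_apply, re_mul_comm, ← mul_assoc, Units.inv_mul, one_mul]

theorem mul_self_eq_neg_one (hre : x.re = 0) (hn : ‖x‖ = 1) : x * x = -1 := by
  have hx : normSq x = 1 := by rw [normSq_eq_norm_mul_self, hn, one_mul]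
  have h := self_mul_star x
  rw [star_eq_neg.2 hre, mul_neg, hx, coe_one] at h
  rw [← h, neg_neg]

theorem re_eq_zero_of_mul_self_eq_neg_one (hx : x * x = -1) : x.re = 0 := by
  have h0 := congrArg QuaternionAlgebra.re hx
  have h1 := congrArg QuaternionAlgebra.imI hx
  have h2 := congrArg QuaternionAlgebra.imJ hx
  have h3 := congrArg QuaternionAlgebra.imK hx
  simp at h0 h1 h2 h3
  by_contra hre
  have hI : x.imI = 0 := (mul_eq_zero.1 (by linarith : x.re * x.imI = 0)).resolve_left hre
  have hJ : x.imJ = 0 := (mul_eq_zero.1 (by linarith : x.re * x.imJ = 0)).resolve_left hre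
  have hK : x.imK = 0 := (mul_eq_zero.1 (by linarith : x.re * x.imK = 0)).resolve_left hre
  rw [hI, hJ, hK] at h0
  nlinarith [sq_nonneg x.re]

theorem re_eq_zero_of_mul_eq_neg_mul (hy : y ≠ 0) (h : x * y = -(y * x)) : x.re = 0 := by
  have : x = -innerAut ℝ (Units.mk0 y hy) x := by
    rw [innerAut_apply, Units.val_inv_eq_inv_val, Units.val_mk0, ← neg_eq_iff_eq_neg.2 h,
      neg_mul, neg_neg, mul_inv_cancel_right₀ hy]
  have hre := congrArg QuaternionAlgebra.re this
  rw [re_neg, re_innerAut] at hre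
  linarith

theorem mul_eq_neg_mul_of_re_mul_eq_zero (hx : x.re = 0) (hy : y.re = 0) (h : (x * y).re = 0) :
    x * y = -(y * x) := by
  simp only [re_mul, hx, hy] at h
  ext <;> simp [hx, hy] <;> linarith

end Quaternion

section UnitCoordinates

@[simp] theorem qi_re : qi.re = 0 := rfl
@[simp] theorem qi_imI : qi.imI = 1 := rfl
@[simp] theorem qi_imJ : qi.imJ = 0 := rfl
@[simp] theorem qi_imK : qi.imK = 0 := rfl
@[simp] theorem qj_re : qj.re = 0 := rfl
@[simp] theorem qj_imI : qj.imI = 0 := rfl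
@[simp] theorem qj_imJ : qj.imJ = 1 := rfl
@[simp] theorem qj_imK : qj.imK = 0 := rfl
@[simp] theorem qk_re : qk.re = 0 := rfl
@[simp] theorem qk_imI : qk.imI = 0 := rfl
@[simp] theorem qk_imJ : qk.imJ = 0 := rfl
@[simp] theorem qk_imK : qk.imK = 1 := rfl

variable (t : ℝ) (Q : ℍ[ℝ])

@[simp] theorem re_expQ : (expQ t Q).re = Real.cos t + Real.sin t * Q.re := by simp [expQ]
@[simp] theorem imI_expQ : (expQ t Q).imI = Real.sin t * Q.imI := by simp [expQ]
@[simp] theorem imJ_expQ : (expQ t Q).imJ = Real.sin t * Q.imJ := by simp [expQ]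
@[simp] theorem imK_expQ : (expQ t Q).imK = Real.sin t * Q.imK := by simp [expQ]

end UnitCoordinates

theorem qi_mul_qi : qi * qi = -1 := by ext <;> simp

theorem qk_mul_qk : qk * qk = -1 := by ext <;> simp

theorem qi_mul_qk : qi * qk = -(qk * qi) := by ext <;> simp

theorem qi_ne_zero : qi ≠ 0 := fun h => by simpa using congrArg QuaternionAlgebra.imI h

section ExpQ

open Real

variable {Q : ℍ[ℝ]}

@[simp] theorem expQ_zero (Q : ℍ[ℝ]) : expQ 0 Q = 1 := by simp [expQ]

theorem expQ_mul_expQ (hQ : Q * Q = -1) (s t : ℝ) :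
    expQ s Q * expQ t Q = expQ (s + t) Q := by
  simp only [expQ, add_mul, mul_add, coe_mul_eq_smul, mul_coe_eq_smul, smul_mul_smul_comm, hQ,
    smul_coe]
  ext <;> simp [cos_add, sin_add] <;> ring

theorem expQ_inv (hQ : Q * Q = -1) (t : ℝ) : (expQ t Q)⁻¹ = expQ (-t) Q := by
  refine inv_eq_of_mul_eq_one_right ?_
  rw [expQ_mul_expQ hQ, add_neg_cancel, expQ_zero]

theorem map_expQ {F : Type*} [FunLike F ℍ[ℝ] ℍ[ℝ]] [AlgHomClass F ℝ ℍ[ℝ] ℍ[ℝ]] (σ : F)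
    (t : ℝ) (Q : ℍ[ℝ]) : σ (expQ t Q) = expQ t (σ Q) := by
  simp only [expQ, map_add, map_smul, ← algebraMap_def, AlgHomClass.commutes]

theorem expQ_eq_coe_of_sin_eq_zero {t : ℝ} (h : sin t = 0) (Q : ℍ[ℝ]) :
    expQ t Q = (cos t : ℍ[ℝ]) := by
  simp [expQ, h]

theorem re_mul_expQ (x : ℍ[ℝ]) (t : ℝ) (Q : ℍ[ℝ]) :
    (x * expQ t Q).re = cos t * x.re + sin t * (x * Q).re := by
  simp; ring

end ExpQ

section Rho

open Real

theorem eq_neg_sin_cos_or_eq_sin_neg_cos {x y φ : ℝ} (hxy : x ^ 2 + y ^ 2 = 1)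
    (h : cos φ * x + sin φ * y = 0) : (x = -sin φ ∧ y = cos φ) ∨ (x = sin φ ∧ y = -cos φ) := by
  set σ := y * cos φ - x * sin φ
  have hx : x = -(σ * sin φ) := by linear_combination cos φ * h - x * sin_sq_add_cos_sq φ
  have hy : y = σ * cos φ := by linear_combination sin φ * h - y * sin_sq_add_cos_sq φ
  have hσ : σ * σ = 1 := by
    linear_combination (cos φ ^ 2 + sin φ ^ 2) * hxy + sin_sq_add_cos_sq φ -
      (cos φ * x + sin φ * y) * h
  rcases mul_self_eq_one_iff.1 hσ with hσ | hσ
  · left; rw [hx, hy, hσ]; constructor <;> ring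
  · right; rw [hx, hy, hσ]; constructor <;> ring

-- The images of `b` and `h` under `ρ(β)`; the perturbation angle `t` stands for `εf(β)`.
def rhoB (β t : ℝ) : ℍ[ℝ] := expQ (π / 2 + β + t) qk * qi

def rhoH (t : ℝ) : ℍ[ℝ] := -(qj * expQ (-t) qk)

def MapsToRho (φ : ℍ[ℝ] → ℍ[ℝ]) (a b h p : ℍ[ℝ]) (β t : ℝ) : Prop :=
  φ a = qi ∧ φ b = rhoB β t ∧ φ h = rhoH t ∧ φ p = expQ t qk

section RhoCoordinates

variable (β t : ℝ)

@[simp] theorem re_rhoB : (rhoB β t).re = 0 := by simp [rhoB]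
@[simp] theorem imI_rhoB : (rhoB β t).imI = -sin (β + t) := by
  simp [rhoB, show π / 2 + β + t = β + t + π / 2 by ring, cos_add_pi_div_two, sin_add_pi_div_two]
@[simp] theorem imJ_rhoB : (rhoB β t).imJ = cos (β + t) := by
  simp [rhoB, show π / 2 + β + t = β + t + π / 2 by ring, cos_add_pi_div_two, sin_add_pi_div_two]
@[simp] theorem imK_rhoB : (rhoB β t).imK = 0 := by simp [rhoB]
@[simp] theorem re_rhoH : (rhoH t).re = 0 := by simp [rhoH]
@[simp] theorem imI_rhoH : (rhoH t).imI = sin t := by simp [rhoH]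
@[simp] theorem imJ_rhoH : (rhoH t).imJ = -cos t := by simp [rhoH]
@[simp] theorem imK_rhoH : (rhoH t).imK = 0 := by simp [rhoH]

end RhoCoordinates

theorem neg_rhoB_mul_expQ (β t : ℝ) : -(rhoB β t * expQ β qk) = rhoH t := by
  obtain ⟨u, rfl⟩ : ∃ u, t = u - β := ⟨β + t, by ring⟩
  ext <;> simp [sin_sub, cos_sub] <;> ring

theorem rhoB_mul_self (β t : ℝ) : rhoB β t * rhoB β t = -1 := by
  ext <;> simp
  · linear_combination -sin_sq_add_cos_sq (β + t)
  · ring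

theorem rhoB_mul_rhoH (β t : ℝ) : rhoB β t * rhoH t = expQ β qk := by
  rw [← neg_rhoB_mul_expQ, mul_neg, ← mul_assoc, rhoB_mul_self, neg_one_mul, neg_neg]

theorem rhoB_add_int_mul_two_pi (β t : ℝ) (n : ℤ) : rhoB (β + n * (2 * π)) t = rhoB β t := by
  ext <;> simp [show β + n * (2 * π) + t = β + t + n * (2 * π) by ring]

theorem mapsToRho_innerAut_qi (β t : ℝ) :
    MapsToRho (innerAut ℝ (Units.mk0 qi qi_ne_zero)) qi (-rhoB β t) (-rhoH t) (expQ t qk)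
      (-β) (-t) := by
  refine ⟨?_, ?_, ?_, ?_⟩ <;> refine innerAut_apply_eq_iff.2 ?_ <;> ext <;>
    simp [← neg_add_rev, add_comm t β]

-- `b` is a unit vector of the `ij`-plane, and the relation `hanti` makes it orthogonal to
-- `e^{(β + t)k} i`.
theorem eq_rho_of_mul_eq_neg_mul_qk {b h : ℍ[ℝ]} {β t : ℝ} (hb : b * b = -1)
    (hbk : b * qk = -(qk * b)) (hbh : b * h = expQ β qk)
    (hanti : qi * (expQ t qk)⁻¹ * h = -(h * (qi * (expQ t qk)⁻¹))) :
    (b = rhoB β t ∧ h = rhoH t) ∨ (b = -rhoB β t ∧ h = -rhoH t) := by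
  have hh : h = -(b * expQ β qk) := eq_neg_mul_of_mul_eq hb hbh
  have hre : b.re = 0 := Quaternion.re_eq_zero_of_mul_self_eq_neg_one hb
  have hk : b.imK = 0 := by
    have := congrArg QuaternionAlgebra.re hbk
    simp [hre] at this
    linarith
  have hunit : b.imI ^ 2 + b.imJ ^ 2 = 1 := by
    have := congrArg QuaternionAlgebra.re hb
    simp [hre, hk] at this
    linarith
  have horth : cos (β + t) * b.imI + sin (β + t) * b.imJ = 0 := by
    have := congrArg QuaternionAlgebra.re hanti
    rw [expQ_inv qk_mul_qk, hh] at this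
    simp [hre, hk] at this
    rw [cos_add, sin_add]
    linear_combination this / 2
  rcases eq_neg_sin_cos_or_eq_sin_neg_cos hunit horth with ⟨h1, h2⟩ | ⟨h1, h2⟩
  · have hbB : b = rhoB β t := by ext <;> simp [hre, hk, h1, h2]
    exact Or.inl ⟨hbB, by rw [hh, hbB, neg_rhoB_mul_expQ]⟩
  · have hbB : b = -rhoB β t := by ext <;> simp [hre, hk, h1, h2]
    exact Or.inr ⟨hbB, by rw [hh, hbB, neg_mul, neg_neg, ← neg_rhoB_mul_expQ, neg_neg]⟩

end Rho

section Existence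

open Real

theorem exists_mapsToRho_of_mul_eq_neg_mul {a b h p Q : ℍ[ℝ]} {β t : ℝ} (ha : a * a = -1)
    (hb : b * b = -1) (hQ : Q * Q = -1) (haQ : a * Q = -(Q * a)) (hbQ : b * Q = -(Q * b))
    (hbh : b * h = expQ β Q) (hp : p = expQ t Q) (hanti : a * p⁻¹ * h = -(h * (a * p⁻¹))) :
    ∃ g : ℍ[ℝ]ˣ, MapsToRho (innerAut ℝ g) a b h p β t ∨
      MapsToRho (innerAut ℝ g) a b h p (-β) (-t) := by
  obtain ⟨g, hga, hgQ⟩ := exists_innerAut_eq_and_eq (K := ℝ) ha qi_mul_qi hQ qk_mul_qk haQ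
    qi_mul_qk qi_ne_zero qi_mul_qk
  have hgp : innerAut ℝ g p = expQ t qk := by rw [hp, map_expQ, hgQ]
  have key := eq_rho_of_mul_eq_neg_mul_qk (b := innerAut ℝ g b) (h := innerAut ℝ g h)
    (by rw [← map_mul, hb, map_neg, map_one])
    (by rw [← hgQ, ← map_mul, hbQ, map_neg, map_mul])
    (by rw [← map_mul, hbh, map_expQ, hgQ])
    (by simpa only [map_mul, map_neg, map_inv₀, hga, hgp] using congrArg (innerAut ℝ g) hanti)
  rcases key with ⟨hgb, hgh⟩ | ⟨hgb, hgh⟩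
  · exact ⟨g, Or.inl ⟨hga, hgb, hgh, hgp⟩⟩
  · obtain ⟨h₁, h₂, h₃, h₄⟩ := mapsToRho_innerAut_qi β t
    refine ⟨Units.mk0 qi qi_ne_zero * g, Or.inr ⟨?_, ?_, ?_, ?_⟩⟩ <;>
      simp only [map_mul, AlgEquiv.mul_apply, hga, hgb, hgh, hgp, h₁, h₂, h₃, h₄]

theorem mul_eq_neg_mul_of_sin_ne_zero {a b h p Q : ℍ[ℝ]} {β t : ℝ} (ha : a * a = -1)
    (hb : b * b = -1) (hh : h * h = -1) (hQ : Q * Q = -1) (hbh : b * h = expQ β Q)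
    (hp : p = expQ t Q) (hanti : a * p⁻¹ * h = -(h * (a * p⁻¹))) (hβ : sin β ≠ 0)
    (ht : sin t ≠ 0) : a * Q = -(Q * a) ∧ b * Q = -(Q * b) := by
  have hra := re_eq_zero_of_mul_self_eq_neg_one ha
  have hrb := re_eq_zero_of_mul_self_eq_neg_one hb
  have hrQ := re_eq_zero_of_mul_self_eq_neg_one hQ
  have hh0 : h ≠ 0 := by rintro rfl; simp at hh
  constructor
  · have hw := re_eq_zero_of_mul_eq_neg_mul hh0 hanti
    rw [hp, expQ_inv hQ, re_mul_expQ, hra, sin_neg] at hw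
    refine mul_eq_neg_mul_of_re_mul_eq_zero hra hrQ ((mul_eq_zero.1 ?_).resolve_left ht)
    linarith
  · have hrh : (-(b * expQ β Q)).re = 0 := by
      rw [← eq_neg_mul_of_mul_eq hb hbh, re_eq_zero_of_mul_self_eq_neg_one hh]
    rw [re_neg, re_mul_expQ, hrb] at hrh
    refine mul_eq_neg_mul_of_re_mul_eq_zero hrb hrQ ((mul_eq_zero.1 ?_).resolve_left hβ)
    linarith

theorem mul_eq_neg_mul_of_mul_eq_coe {a b h : ℍ[ℝ]} {c : ℝ} (hb : b * b = -1)
    (hbh : b * h = c) (hc : c ≠ 0) (hanti : a * h = -(h * a)) : a * b = -(b * a) := by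
  rw [eq_neg_mul_of_mul_eq hb hbh, mul_coe_eq_smul, mul_neg, neg_mul, neg_neg, mul_smul_comm,
    smul_mul_assoc] at hanti
  have : c • (a * b) = c • -(b * a) := by rw [smul_neg, ← hanti, neg_neg]
  exact smul_right_injective _ hc this

theorem exists_mapsToRho {a b h p Q : ℍ[ℝ]} {β t : ℝ} (ha : a * a = -1) (hb : b * b = -1)
    (hh : h * h = -1) (hQ : Q * Q = -1) (hbh : b * h = expQ β Q) (hp : p = expQ t Q)
    (hanti : a * p⁻¹ * h = -(h * (a * p⁻¹))) (ht : t = 0 ↔ sin β = 0) (htπ : |t| < π) :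
    ∃ g : ℍ[ℝ]ˣ, MapsToRho (innerAut ℝ g) a b h p β t ∨
      MapsToRho (innerAut ℝ g) a b h p (-β) (-t) := by
  by_cases hβ : sin β = 0
  -- Here `p = 1` and `b h = ±1`, so any axis will do; `a b` anticommutes with `a` and `b`.
  · have hp1 : p = 1 := by rw [hp, ht.2 hβ, expQ_zero]
    have hc : cos β ≠ 0 := fun h0 => by simpa [hβ, h0] using sin_sq_add_cos_sq β
    have hbh' : b * h = (cos β : ℍ[ℝ]) := by rw [hbh, expQ_eq_coe_of_sin_eq_zero hβ]
    have hab := mul_eq_neg_mul_of_mul_eq_coe hb hbh' hc (by simpa [hp1] using hanti)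
    obtain ⟨hQ', haQ', hbQ'⟩ := mul_mul_self_eq_neg_one_and_anticomm ha hb hab
    exact exists_mapsToRho_of_mul_eq_neg_mul ha hb hQ' haQ' hbQ'
      (by rw [hbh', expQ_eq_coe_of_sin_eq_zero hβ]) (by rw [hp1, ht.2 hβ, expQ_zero]) hanti
  · have ht' : sin t ≠ 0 := by
      obtain ⟨h₁, h₂⟩ := abs_lt.1 htπ
      rw [Ne, sin_eq_zero_iff_of_lt_of_lt h₁ h₂]
      exact fun h0 => hβ (ht.1 h0)
    obtain ⟨haQ, hbQ⟩ := mul_eq_neg_mul_of_sin_ne_zero ha hb hh hQ hbh hp hanti hβ ht'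
    exact exists_mapsToRho_of_mul_eq_neg_mul ha hb hQ haQ hbQ hbh hp hanti

end Existence

section Uniqueness

open Real Set

theorem MapsToRho.cos_sin {a b h p : ℍ[ℝ]} {g : ℍ[ℝ]ˣ} {β t : ℝ}
    (hg : MapsToRho (innerAut ℝ g) a b h p β t) : cos β = (b * h).re ∧ sin β = (b * p * a).re := by
  obtain ⟨ha, hb, hh, hp⟩ := hg
  rw [← Quaternion.re_innerAut g (b * h), ← Quaternion.re_innerAut g (b * p * a)]
  simp only [map_mul, ha, hb, hh, hp, rhoB_mul_rhoH]
  obtain ⟨u, rfl⟩ : ∃ u, t = u - β := ⟨β + t, by ring⟩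
  constructor
  · simp
  · simp [sin_sub, cos_sub]
    linear_combination -sin β * sin_sq_add_cos_sq u

theorem coe_angle_eq_of_mapsToRho {a b h p : ℍ[ℝ]} {g₁ g₂ : ℍ[ℝ]ˣ} {β₁ β₂ t₁ t₂ : ℝ}
    (h₁ : MapsToRho (innerAut ℝ g₁) a b h p β₁ t₁) (h₂ : MapsToRho (innerAut ℝ g₂) a b h p β₂ t₂) :
    (β₁ : Real.Angle) = β₂ :=
  Real.Angle.cos_sin_inj (h₁.cos_sin.1.trans h₂.cos_sin.1.symm)
    (h₁.cos_sin.2.trans h₂.cos_sin.2.symm)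

theorem eq_of_coe_angle_eq_of_mem_Ico {x y : ℝ} (h : (x : Real.Angle) = y)
    (hx : x ∈ Ico 0 (2 * π)) (hy : y ∈ Ico 0 (2 * π)) : x = y := by
  obtain ⟨k, hk⟩ := Real.Angle.angle_eq_iff_two_pi_dvd_sub.1 h
  have := (toIcoMod_eq_toIcoMod two_pi_pos (a := 0) (b := y) (c := x)).2
    ⟨k, by rw [hk, zsmul_eq_mul, mul_comm]⟩
  rw [(toIcoMod_eq_self two_pi_pos).2 (by rwa [zero_add]),
    (toIcoMod_eq_self two_pi_pos).2 (by rwa [zero_add])] at this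
  exact this.symm

end Uniqueness

section Normalization

open Real Set

theorem exists_norm_eq_one_conj_eq_innerAut (u : ℍ[ℝ]ˣ) :
    ∃ g : ℍ[ℝ], ‖g‖ = 1 ∧ (fun x => g * x * g⁻¹) = ⇑(innerAut ℝ u) := by
  have hn : ‖(u : ℍ[ℝ])‖ ≠ 0 := norm_ne_zero_iff.2 u.ne_zero
  refine ⟨‖(u : ℍ[ℝ])‖⁻¹ • (u : ℍ[ℝ]), ?_, funext fun x => ?_⟩
  · rw [norm_smul, norm_inv, norm_norm, inv_mul_cancel₀ hn]
  · rw [smul_inv₀, inv_inv, innerAut_apply, Units.val_inv_eq_inv_val, smul_mul_assoc,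
      smul_mul_assoc, mul_smul_comm, smul_smul, inv_mul_cancel₀ hn, one_smul]

theorem exists_mem_Ico_mapsToRho {τ : ℝ → ℝ} (hτ : Function.Periodic τ (2 * π))
    {a b h p : ℍ[ℝ]} {u : ℍ[ℝ]ˣ} {β₀ : ℝ} (hu : MapsToRho (innerAut ℝ u) a b h p β₀ (τ β₀)) :
    ∃ β ∈ Ico 0 (2 * π), ∃ g : ℍ[ℝ], ‖g‖ = 1 ∧
      MapsToRho (fun x => g * x * g⁻¹) a b h p β (τ β) := by
  obtain ⟨β, hβ, n, rfl⟩ : ∃ β ∈ Ico 0 (2 * π), ∃ n : ℤ, β₀ = β + n * (2 * π) :=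
    ⟨_, toIcoMod_mem_Ico' two_pi_pos β₀, _,
      by rw [← zsmul_eq_mul, toIcoMod_add_toIcoDiv_zsmul]⟩
  obtain ⟨g, hg, hgu⟩ := exists_norm_eq_one_conj_eq_innerAut u
  obtain ⟨ha, hb, hh, hp⟩ := hu
  rw [hτ.int_mul n β] at hb hh hp
  rw [rhoB_add_int_mul_two_pi] at hb
  exact ⟨β, hβ, g, hg, by rw [hgu]; exact ⟨ha, hb, hh, hp⟩⟩

theorem eq_of_mapsToRho_of_mem_Ico {a b h p g₁ g₂ : ℍ[ℝ]} {β₁ β₂ t₁ t₂ : ℝ} (hg₁ : g₁ ≠ 0)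
    (hg₂ : g₂ ≠ 0) (h₁ : MapsToRho (fun x => g₁ * x * g₁⁻¹) a b h p β₁ t₁)
    (h₂ : MapsToRho (fun x => g₂ * x * g₂⁻¹) a b h p β₂ t₂) (hβ₁ : β₁ ∈ Ico 0 (2 * π))
    (hβ₂ : β₂ ∈ Ico 0 (2 * π)) : β₁ = β₂ := by
  rw [← coe_innerAut_mk0 (R := ℝ) g₁ hg₁] at h₁
  rw [← coe_innerAut_mk0 (R := ℝ) g₂ hg₂] at h₂
  exact eq_of_coe_angle_eq_of_mem_Ico (coe_angle_eq_of_mapsToRho h₁ h₂) hβ₁ hβ₂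

end Normalization

/-- The perturbed moduli space `R^♮_π(B³, A₁ ∪ A₂)` is a circle: for all small enough
`ε > 0`, every admissible tuple `(a,b,h,p)` of unit quaternions — encoding a perturbed
traceless representation of the tangle-with-earring-and-perturbation-curve group — is
simultaneously conjugate to
`ρ(β) = (i, e^{(π/2+β+εf(β))k}i, -j e^{-εf(β)k}, e^{εf(β)k})` for exactly one
`β ∈ [0, 2π)`. -/
theorem perturbed_moduli_space_is_circle
    (f : ℝ → ℝ)
    (hodd : ∀ x : ℝ, f (-x) = -f x)
    (hper : ∀ x : ℝ, f (x + 2 * Real.pi) = f x)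
    (hbound : ∀ x : ℝ, |f x| ≤ 1)
    (hzero : ∀ x : ℝ, f x = 0 ↔ ∃ n : ℤ, x = Real.pi * n) :
    ∃ ε₀ : ℝ, 0 < ε₀ ∧ ∀ ε : ℝ, 0 < ε → ε < ε₀ →
      ∀ a b h p : ℍ[ℝ],
        (‖a‖ = 1 ∧ ‖b‖ = 1 ∧ ‖h‖ = 1 ∧ ‖p‖ = 1) →
        (a.re = 0 ∧ b.re = 0 ∧ h.re = 0) →
        ((p⁻¹ * b * p)⁻¹ * b * a).re = 0 →
        (b * h) * p = p * (b * h) →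
        (a * p⁻¹) * h = -(h * (a * p⁻¹)) →
        (∃ β' : ℝ, ∃ Q : ℍ[ℝ], ‖Q‖ = 1 ∧ Q.re = 0 ∧
          b * h = expQ β' Q ∧ p = expQ (ε * f β') Q) →
        ∃! β : ℝ, β ∈ Set.Ico 0 (2 * Real.pi) ∧
          ∃ g : ℍ[ℝ], ‖g‖ = 1 ∧
            g * a * g⁻¹ = qi ∧
            g * b * g⁻¹ = expQ (Real.pi / 2 + β + ε * f β) qk * qi ∧
            g * h * g⁻¹ = -(qj * expQ (-(ε * f β)) qk) ∧
            g * p * g⁻¹ = expQ (ε * f β) qk := by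
  refine ⟨1, one_pos, fun ε hε hε1 a b h p ⟨na, nb, nh, _⟩ ⟨ra, rb, rh⟩ _ _ hanti
    ⟨β', Q, nQ, rQ, hbh, hp⟩ => ?_⟩
  have hsmall : |ε * f β'| < Real.pi := by
    rw [abs_mul, abs_of_pos hε]
    nlinarith [hbound β', Real.pi_gt_three, abs_nonneg (f β')]
  have hzero' : ε * f β' = 0 ↔ Real.sin β' = 0 := by
    rw [mul_eq_zero, or_iff_right hε.ne', hzero, Real.sin_eq_zero_iff]
    simp only [eq_comm, mul_comm]
  obtain ⟨u, hu⟩ := exists_mapsToRho (Quaternion.mul_self_eq_neg_one ra na)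
    (Quaternion.mul_self_eq_neg_one rb nb) (Quaternion.mul_self_eq_neg_one rh nh)
    (Quaternion.mul_self_eq_neg_one rQ nQ) hbh hp hanti hzero' hsmall
  obtain ⟨β₀, hβ₀⟩ : ∃ β₀, MapsToRho (innerAut ℝ u) a b h p β₀ (ε * f β₀) := by
    rcases hu with hu | hu
    · exact ⟨β', hu⟩
    · exact ⟨-β', by rwa [hodd, mul_neg]⟩
  obtain ⟨β, hβ, g, hg, hgρ⟩ := exists_mem_Ico_mapsToRho (Function.Periodic.comp hper (ε * ·)) hβ₀
  refine ⟨β, ⟨hβ, g, hg, hgρ⟩, fun β₂ ⟨hβ₂, g₂, hg₂, hρ₂⟩ => ?_⟩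
  exact eq_of_mapsToRho_of_mem_Ico (norm_ne_zero_iff.1 (by rw [hg₂]; exact one_ne_zero))
    (norm_ne_zero_iff.1 (by rw [hg]; exact one_ne_zero)) hρ₂ hgρ hβ₂ hβ
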